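/- The singular simplicial set functor Sing : Cpx → sSet, defined by Sing(K)_n = Hom_Cpx(Δⁿ, K), is fully faithful. -/

import Mathlib

/-- An (abstract) simplicial complex: a vertex type together with a collection of
finite subsets (faces) closed under taking subsets, containing all singletons
(so every vertex is a face) and the empty set. -/
structure Cpx : Type 1 where
  V : Type
  faces : Set (Set V)
  finite_mem : ∀ σ ∈ faces, σ.Finite
  down : ∀ σ ∈ faces, ∀ τ ⊆ σ, τ ∈ faces
  vert : ∀ x : V, ({x} : Set V) ∈ faces
  empty_mem : (∅ : Set V) ∈ faces

/-- A map of simplicial complexes: a vertex function sending faces to faces. -/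
structure CpxHom (K L : Cpx) where
  f : K.V → L.V
  map_face : ∀ σ ∈ K.faces, f '' σ ∈ L.faces

theorem CpxHom.ext' {K L : Cpx} {a b : CpxHom K L} (h : a.f = b.f) : a = b := by
  cases a; cases b; cases h; rfl

/-- Composition of maps of simplicial complexes. -/
def CpxHom.comp {K L M : Cpx} (g : CpxHom L M) (h : CpxHom K L) : CpxHom K M where
  f := g.f ∘ h.f
  map_face := fun σ hσ => by
    rw [Set.image_comp]
    exact g.map_face _ (h.map_face _ hσ)

/-- The full simplex `Δⁿ` on vertices `{0, …, n}`: every subset is a face. -/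
abbrev simplexCpx (n : ℕ) : Cpx where
  V := Fin (n + 1)
  faces := {σ | σ.Finite}
  finite_mem := fun _ h => h
  down := fun _ hσ _ hτ => hσ.subset hτ
  vert := fun x => Set.finite_singleton x
  empty_mem := Set.finite_empty

/-- The map of simplices induced by a vertex function. -/
def simplexHom {m n : ℕ} (g : Fin (m + 1) → Fin (n + 1)) :
    CpxHom (simplexCpx m) (simplexCpx n) where
  f := g
  map_face := fun σ hσ => hσ.image g
/-- A map of the singular simplicial sets `Sing K → Sing L`: a family of maps on
`n`-simplices (maps `Δⁿ → K`), natural with respect to all monotone vertex maps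
between simplices. -/
structure SingMap (K L : Cpx) where
  app : ∀ n : ℕ, CpxHom (simplexCpx n) K → CpxHom (simplexCpx n) L
  naturality : ∀ (m n : ℕ) (g : Fin (m + 1) → Fin (n + 1)), Monotone g →
    ∀ σ : CpxHom (simplexCpx n) K,
      app m (σ.comp (simplexHom g)) = (app n σ).comp (simplexHom g)

/-- The map of singular simplicial sets induced by a map of simplicial complexes. -/
def singMapOf {K L : Cpx} (f : CpxHom K L) : SingMap K L where
  app := fun _ σ => f.comp σ
  naturality := fun _ _ _ _ _ => rfl

/-! Naturality along the vertex inclusions `Δ⁰ → Δⁿ` shows that a map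
`F : Sing K → Sing L` acts on every simplex vertexwise, through its action on `0`-simplices,
i.e. through a map of vertex sets. That vertex map sends faces to faces because every
nonempty face of `K` is the image of a simplex `Δⁿ → K`, which `F` sends to a simplex
of `L`. -/

def CpxHom.const (K : Cpx) (n : ℕ) (v : K.V) : CpxHom (simplexCpx n) K where
  f := fun _ => v
  map_face := fun _ _ =>
    K.down {v} (K.vert v) _ ((Set.image_subset_range _ _).trans Set.range_const_subset)

theorem Cpx.exists_simplex_range_eq {K : Cpx} {σ : Set K.V} (hσ : σ ∈ K.faces)
    (hne : σ.Nonempty) : ∃ (n : ℕ) (τ : CpxHom (simplexCpx n) K), Set.range τ.f = σ := by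
  obtain ⟨_ | n, e, he⟩ := (K.finite_mem σ hσ).fin_embedding
  · rw [Set.range_eq_empty] at he
    exact absurd he.symm hne.ne_empty
  · exact ⟨n, ⟨e, fun _ _ => K.down σ hσ _ (he ▸ Set.image_subset_range _ _)⟩, he⟩

namespace SingMap

variable {K L : Cpx}

theorem ext {F G : SingMap K L} (h : F.app = G.app) : F = G := by
  cases F; cases G; cases h; rfl

def vertexMap (F : SingMap K L) (v : K.V) : L.V :=
  (F.app 0 (CpxHom.const K 0 v)).f 0

theorem app_apply (F : SingMap K L) {n : ℕ} (τ : CpxHom (simplexCpx n) K)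
    (i : Fin (n + 1)) : (F.app n τ).f i = F.vertexMap (τ.f i) := by
  have h := F.naturality 0 n (fun _ => i) monotone_const τ
  exact (congrArg (fun g : CpxHom (simplexCpx 0) L => g.f 0) h).symm

theorem vertexMap_image_mem_faces (F : SingMap K L) {σ : Set K.V} (hσ : σ ∈ K.faces) :
    F.vertexMap '' σ ∈ L.faces := by
  rcases σ.eq_empty_or_nonempty with rfl | hne
  · simpa using L.empty_mem
  obtain ⟨n, τ, rfl⟩ := K.exists_simplex_range_eq hσ hne
  have hrange : Set.range (F.app n τ).f = F.vertexMap '' Set.range τ.f := by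
    rw [← Set.range_comp]
    exact congrArg Set.range (funext (F.app_apply τ))
  rw [← hrange, ← Set.image_univ]
  exact (F.app n τ).map_face Set.univ Set.finite_univ

def toCpxHom (F : SingMap K L) : CpxHom K L :=
  ⟨F.vertexMap, fun _ => F.vertexMap_image_mem_faces⟩

theorem singMapOf_toCpxHom (F : SingMap K L) : singMapOf F.toCpxHom = F :=
  ext <| funext fun _ => funext fun τ => CpxHom.ext' <| funext fun i => (F.app_apply τ i).symm

theorem toCpxHom_singMapOf (f : CpxHom K L) : (singMapOf f).toCpxHom = f :=
  CpxHom.ext' rfl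

end SingMap

/-- The singular simplicial set functor `Sing : Cpx → sSet` is fully faithful:
maps of simplicial complexes `K → L` correspond bijectively to maps of simplicial
sets `Sing K → Sing L`. -/
theorem sing_fullyFaithful (K L : Cpx) :
    Function.Bijective (fun f : CpxHom K L => singMapOf f) :=
  Function.bijective_iff_has_inverse.mpr
    ⟨SingMap.toCpxHom, SingMap.toCpxHom_singMapOf, SingMap.singMapOf_toCpxHom⟩
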